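/- For a single product routed on a path, replacing the three-constraint flow-balance formulation (departures bounded by arrivals within a ρ-window, plus total inflow = total outflow) by the inventory-balance formulation with storage variables r is equivalent: a 0-1 flow x on a time-expanded path satisfies departures-at-t only from arrivals within [t-ρ, t] and total conservation if and only if there exist binary r_{t} with outflow(t) + r_t = r_{t-1} + inflow(t) and ∑_t r_t ≤ ρ. -/
import Mathlib


/-- for a single product at a single in-transit node, the
ρ-window flow-balance formulation is equivalent to the inventory-balance
formulation with binary storage variables r and ∑ r ≤ ρ. -/
theorem stmt_9 (T ρ : ℕ) (inflow outflow : ℕ → ℕ)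
    (hinbin : ∀ t, inflow t ≤ 1) (houtbin : ∀ t, outflow t ≤ 1)
    (hinT : ∀ t > T, inflow t = 0) (houtT : ∀ t > T, outflow t = 0)
    (hcons : ∑ t ∈ Finset.range (T + 1), inflow t =
      ∑ t ∈ Finset.range (T + 1), outflow t)
    (hone : ∑ t ∈ Finset.range (T + 1), inflow t ≤ 1) :
    (∀ t ≤ T, outflow t = 1 → ∃ t', t' ≤ t ∧ inflow t' = 1 ∧ t ≤ t' + ρ) ↔
      (∃ r : ℕ → ℕ, (∀ t, r t ≤ 1) ∧
        (∀ t ≤ T, outflow t + r t = (if t = 0 then 0 else r (t - 1)) + inflow t) ∧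
        ∑ t ∈ Finset.range (T + 1), r t ≤ ρ) := by
  constructor
  · intro h
    by_cases hS : ∑ t ∈ Finset.range (T + 1), inflow t = 0
    · refine ⟨fun _ => 0, fun _ => Nat.zero_le 1, ?_, by simp⟩
      intro t ht
      have hi : inflow t = 0 :=
        Finset.sum_eq_zero_iff.mp hS t (Finset.mem_range.mpr (by omega))
      have h0 : ∑ t ∈ Finset.range (T+1), outflow t = 0 := by omega
      have ho : outflow t = 0 :=
        Finset.sum_eq_zero_iff.mp h0 t (Finset.mem_range.mpr (by omega))
      simp [hi, ho]
    · obtain ⟨a, haR, hane⟩ : ∃ a ∈ Finset.range (T+1), inflow a ≠ 0 := by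
        by_contra hc
        push_neg at hc
        exact hS (Finset.sum_eq_zero hc)
      have haT : a ≤ T := by have := Finset.mem_range.mp haR; omega
      have hina : inflow a = 1 := by have := hinbin a; omega
      have hin0 : ∀ t, t ≤ T → t ≠ a → inflow t = 0 := by
        intro t htT hta
        have he := Finset.add_sum_erase _ inflow haR
        have hz : ∑ x ∈ (Finset.range (T+1)).erase a, inflow x = 0 := by omega
        exact Finset.sum_eq_zero_iff.mp hz t
          (Finset.mem_erase.mpr ⟨hta, Finset.mem_range.mpr (by omega)⟩)
      have hSout : ∑ t ∈ Finset.range (T + 1), outflow t ≠ 0 := by omega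
      obtain ⟨b, hbR, hbne⟩ : ∃ b ∈ Finset.range (T+1), outflow b ≠ 0 := by
        by_contra hc
        push_neg at hc
        exact hSout (Finset.sum_eq_zero hc)
      have hbT : b ≤ T := by have := Finset.mem_range.mp hbR; omega
      have houtb : outflow b = 1 := by have := houtbin b; omega
      have hout0 : ∀ t, t ≤ T → t ≠ b → outflow t = 0 := by
        intro t htT htb
        have he := Finset.add_sum_erase _ outflow hbR
        have hz : ∑ x ∈ (Finset.range (T+1)).erase b, outflow x = 0 := by omega
        exact Finset.sum_eq_zero_iff.mp hz t
          (Finset.mem_erase.mpr ⟨htb, Finset.mem_range.mpr (by omega)⟩)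
      obtain ⟨t', ht'b, ht'in, hbt'⟩ := h b hbT houtb
      have ht'a : t' = a := by
        by_contra hne
        have := hin0 t' (le_trans ht'b hbT) hne
        omega
      rw [ht'a] at ht'b hbt'
      refine ⟨fun t => if a ≤ t ∧ t < b then 1 else 0, ?_, ?_, ?_⟩
      · intro t; dsimp only; split <;> omega
      · intro t htT
        have h1 : inflow t = if t = a then 1 else 0 := by
          split
          · subst ‹t = a›; exact hina
          · exact hin0 t htT ‹_›
        have h2 : outflow t = if t = b then 1 else 0 := by
          split
          · subst ‹t = b›; exact houtb
          · exact hout0 t htT ‹_›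
        dsimp only
        rw [h1, h2]
        split_ifs <;> omega
      · have hfil : (∑ t ∈ Finset.range (T+1), if a ≤ t ∧ t < b then 1 else 0)
            = ((Finset.range (T+1)).filter (fun t => a ≤ t ∧ t < b)).card := by
          rw [← Finset.sum_filter]
          simp
        have hfe : (Finset.range (T+1)).filter (fun t => a ≤ t ∧ t < b)
            = Finset.Ico a b := by
          ext x
          simp only [Finset.mem_filter, Finset.mem_range, Finset.mem_Ico]
          omega
        dsimp only
        rw [hfil, hfe, Nat.card_Ico]
        omega
  · rintro ⟨r, hr1, hbal, hrsum⟩ b hbT houtb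
    have key : ∀ s, s ≤ T →
        r s + ∑ u ∈ Finset.range (s+1), outflow u
          = ∑ u ∈ Finset.range (s+1), inflow u := by
      intro s
      induction s with
      | zero =>
        intro _
        have h0 := hbal 0 (Nat.zero_le T)
        simp at h0 ⊢
        omega
      | succ n ih =>
        intro hs
        have h1 := ih (by omega)
        have h2 := hbal (n+1) hs
        rw [if_neg (by omega)] at h2
        norm_num at h2
        rw [Finset.sum_range_succ outflow (n+1), Finset.sum_range_succ inflow (n+1)]
        omega
    have hkb := key b hbT
    have houtge : 1 ≤ ∑ u ∈ Finset.range (b+1), outflow u := by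
      have := Finset.single_le_sum (f := outflow)
        (fun i _ => Nat.zero_le _) (Finset.self_mem_range_succ b)
      omega
    have hinpos : ∑ u ∈ Finset.range (b+1), inflow u ≠ 0 := by omega
    obtain ⟨a, haR, hane⟩ : ∃ a ∈ Finset.range (b+1), inflow a ≠ 0 := by
      by_contra hc
      push_neg at hc
      exact hinpos (Finset.sum_eq_zero hc)
    have hab : a ≤ b := by have := Finset.mem_range.mp haR; omega
    have hina : inflow a = 1 := by have := hinbin a; omega
    have hinS : ∑ t ∈ Finset.range (T + 1), inflow t = 1 := by
      have := Finset.single_le_sum (f := inflow)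
        (fun i _ => Nat.zero_le _) (Finset.mem_range.mpr (show a < T+1 by omega))
      omega
    have houtS : ∑ t ∈ Finset.range (T + 1), outflow t = 1 := by omega
    have hout0 : ∀ u, u ≤ T → u ≠ b → outflow u = 0 := by
      intro u huT hub
      have he := Finset.add_sum_erase _ outflow (Finset.mem_range.mpr (show b < T+1 by omega))
      have hz : ∑ x ∈ (Finset.range (T+1)).erase b, outflow x = 0 := by omega
      exact Finset.sum_eq_zero_iff.mp hz u
        (Finset.mem_erase.mpr ⟨hub, Finset.mem_range.mpr (by omega)⟩)
    have hreq : ∀ s, a ≤ s → s < b → r s = 1 := by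
      intro s has hsb
      have hsT : s ≤ T := by omega
      have hk := key s hsT
      have hoz : ∑ u ∈ Finset.range (s+1), outflow u = 0 :=
        Finset.sum_eq_zero (fun u hu => hout0 u
          (by have := Finset.mem_range.mp hu; omega)
          (by have := Finset.mem_range.mp hu; omega))
      have hig : 1 ≤ ∑ u ∈ Finset.range (s+1), inflow u := by
        have := Finset.single_le_sum (f := inflow)
          (fun i _ => Nat.zero_le _) (Finset.mem_range.mpr (show a < s+1 by omega))
        omega
      have := hr1 s
      omega
    have hsub : Finset.Ico a b ⊆ Finset.range (T+1) := by
      intro x hx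
      have := Finset.mem_Ico.mp hx
      exact Finset.mem_range.mpr (by omega)
    have hge : b - a ≤ ∑ t ∈ Finset.range (T+1), r t := by
      calc b - a = ∑ _t ∈ Finset.Ico a b, 1 := by simp
        _ = ∑ t ∈ Finset.Ico a b, r t :=
            Finset.sum_congr rfl (fun x hx => by
              have := Finset.mem_Ico.mp hx
              exact (hreq x this.1 this.2).symm)
        _ ≤ ∑ t ∈ Finset.range (T+1), r t :=
            Finset.sum_le_sum_of_subset hsub
    exact ⟨a, hab, hina, by omega⟩
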